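/- arXiv:2605.24758 — 3 statements merged into one kernel-verified Lean document; each statement's English description precedes it below -/
import Mathlib

section
/- Let g(Q) = (κ/2)tr(Q²) − [(α/2)tr(Q²) − (β/3)tr(Q³) + (γ/4)(tr(Q²))²] be defined on symmetric traceless d×d matrices Q. If ‖Q‖ ≤ M (operator norm and Frobenius norm both bounded by M) and κ ≥ α + 2|β|M + 3|γ|M², then the second derivative (Hessian quadratic form) of g at Q is positive semidefinite: for every symmetric traceless P, D²g(Q)[P,P] = (κ−α)tr(P²) + 2β tr(QP²) − γ[tr(Q²)tr(P²) + 2(tr(PQ))²] ≥ 0. -/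
open Matrix Finset

lemma trace_mul_eq {n : ℕ} (A B : Matrix (Fin n) (Fin n) ℝ) :
    (A * B).trace = ∑ i, ∑ j, A i j * B j i := by
  simp [Matrix.trace, Matrix.diag, Matrix.mul_apply]

-- for symmetric A : trace (A*A) = sum of squares
lemma trace_sq_symm {n : ℕ} (A : Matrix (Fin n) (Fin n) ℝ) (h : Aᵀ = A) :
    (A * A).trace = ∑ i, ∑ j, A i j ^ 2 := by
  rw [trace_mul_eq]
  refine Finset.sum_congr rfl fun i _ => Finset.sum_congr rfl fun j _ => ?_
  have : A j i = A i j := by conv_lhs => rw [← h, Matrix.transpose_apply]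
  rw [this]; ring

set_option maxHeartbeats 1600000 in
theorem stmt5 {d : ℕ} (M α β γ κ : ℝ) (hM : 0 < M)
    (Q P : Matrix (Fin d) (Fin d) ℝ)
    (hQ : Q.IsHermitian) (hQ0 : Q.trace = 0)
    (hP : P.IsSymm) (hP0 : P.trace = 0)
    (hspec : ∀ i, |hQ.eigenvalues i| ≤ M)
    (hfrob : Real.sqrt ((Q * Q).trace) ≤ M)
    (hκ : κ ≥ α + 2 * |β| * M + 3 * |γ| * M ^ 2) :
    (κ - α) * (P * P).trace + 2 * β * (Q * P * P).trace
      - γ * ((Q * Q).trace * (P * P).trace + 2 * ((P * Q).trace) ^ 2) ≥ 0 := by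
  have hQsymm : Qᵀ = Q := hQ
  have hPsymm : Pᵀ = P := hP
  -- notation
  set U : Matrix (Fin d) (Fin d) ℝ := (hQ.eigenvectorUnitary : Matrix (Fin d) (Fin d) ℝ) with hU
  have hUU : star U * U = 1 := Unitary.coe_star_mul_self _
  have hUU' : U * star U = 1 := Unitary.coe_mul_star_self _
  set S : Matrix (Fin d) (Fin d) ℝ := star U * P * U with hS
  have hSsymm : Sᵀ = S := by
    have : star S = S := by
      rw [hS]
      simp only [StarMul.star_mul, star_star]
      have : star P = P := by simpa [Matrix.star_eq_conjTranspose, Matrix.conjTranspose_eq_transpose_of_trivial] using hPsymm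
      rw [this, mul_assoc]
    simpa [Matrix.star_eq_conjTranspose, Matrix.conjTranspose_eq_transpose_of_trivial] using this
  set D : Matrix (Fin d) (Fin d) ℝ := Matrix.diagonal hQ.eigenvalues with hD
  have hQdiag : Q = U * D * star U := by
    have := hQ.spectral_theorem
    simpa [hU, hD] using this
  have key : S * S = star U * (P * P) * U := by
    have h0 : S * S = star U * P * (U * star U) * (P * U) := by rw [hS]; noncomm_ring
    rw [h0, hUU', mul_one]; noncomm_ring
  -- trace (P*P) = trace (S*S)
  have htrPS : (P * P).trace = (S * S).trace := by
    rw [key, Matrix.trace_mul_cycle, hUU', one_mul]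
  -- trace (Q*P*P) = sum of eigenvalues times diag
  have htrQPP : (Q * P * P).trace = ∑ i, hQ.eigenvalues i * ((S * S) i i) := by
    have h1 : Q * P * P = U * (D * (S * S)) * star U := by
      rw [key, hQdiag]
      have h2 : U * (D * (star U * (P * P) * U)) * star U
          = U * D * star U * (P * P) * (U * star U) := by noncomm_ring
      rw [h2, hUU', mul_one, mul_assoc]
    rw [h1, Matrix.trace_mul_cycle, ← mul_assoc, hUU, one_mul, hD]
    simp [Matrix.trace, Matrix.diag, Matrix.mul_apply, Matrix.diagonal]
  -- diagonal entries of S*S are nonneg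
  have hSSdiag : ∀ i, (S * S) i i = ∑ j, S i j ^ 2 := by
    intro i
    rw [Matrix.mul_apply]
    refine Finset.sum_congr rfl fun j _ => ?_
    have : S j i = S i j := by conv_lhs => rw [← hSsymm, Matrix.transpose_apply]
    rw [this]; ring
  have hSSnn : ∀ i, 0 ≤ (S * S) i i := fun i => by
    rw [hSSdiag]; positivity
  have htrSS : (S * S).trace = ∑ i, (S * S) i i := rfl
  -- key bound: |tr(QPP)| ≤ M * tr(PP)
  have hQPPbound : |(Q * P * P).trace| ≤ M * (P * P).trace := by
    rw [htrQPP, htrPS, htrSS]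
    calc |∑ i, hQ.eigenvalues i * (S * S) i i|
        ≤ ∑ i, |hQ.eigenvalues i * (S * S) i i| := Finset.abs_sum_le_sum_abs _ _
      _ ≤ ∑ i, M * (S * S) i i := by
          refine Finset.sum_le_sum fun i _ => ?_
          rw [abs_mul, abs_of_nonneg (hSSnn i)]
          exact mul_le_mul_of_nonneg_right (hspec i) (hSSnn i)
      _ = M * ∑ i, (S * S) i i := by rw [Finset.mul_sum]
  -- tr(PP) ≥ 0
  have htrPPnn : 0 ≤ (P * P).trace := by
    rw [trace_sq_symm P hPsymm]; positivity
  -- tr(QQ) ≥ 0 and ≤ M^2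
  have htrQQnn : 0 ≤ (Q * Q).trace := by
    rw [trace_sq_symm Q hQsymm]; positivity
  have htrQQle : (Q * Q).trace ≤ M ^ 2 := by
    have h := Real.sq_sqrt htrQQnn
    rw [← h]
    exact pow_le_pow_left₀ (Real.sqrt_nonneg _) hfrob 2
  -- Cauchy-Schwarz : tr(PQ)^2 ≤ tr(PP) * tr(QQ)
  have hCS : ((P * Q).trace) ^ 2 ≤ (P * P).trace * (Q * Q).trace := by
    have h1 : (P * Q).trace = ∑ p : Fin d × Fin d, P p.1 p.2 * Q p.1 p.2 := by
      rw [trace_mul_eq, ← Finset.sum_product']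
      refine Finset.sum_congr rfl fun p _ => ?_
      have : Q p.2 p.1 = Q p.1 p.2 := by conv_lhs => rw [← hQsymm, Matrix.transpose_apply]
      rw [this]
    have h2 : (P * P).trace = ∑ p : Fin d × Fin d, P p.1 p.2 ^ 2 := by
      rw [trace_sq_symm P hPsymm, ← Finset.sum_product']
      rfl
    have h3 : (Q * Q).trace = ∑ p : Fin d × Fin d, Q p.1 p.2 ^ 2 := by
      rw [trace_sq_symm Q hQsymm, ← Finset.sum_product']
      rfl
    rw [h1, h2, h3]
    exact Finset.sum_mul_sq_le_sq_mul_sq _ _ _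
  -- combine
  set t := (P * P).trace
  set a := (Q * P * P).trace
  set q := (Q * Q).trace
  set c := (P * Q).trace
  have h1 : β * a ≥ -(|β| * M * t) := by
    have hba : |β * a| ≤ |β| * (M * t) := by
      rw [abs_mul]
      exact mul_le_mul_of_nonneg_left hQPPbound (abs_nonneg β)
    linarith [neg_abs_le (β * a)]
  have hqt : q * t ≤ M ^ 2 * t := mul_le_mul_of_nonneg_right htrQQle htrPPnn
  have hqt0 : (0:ℝ) ≤ q * t := mul_nonneg htrQQnn htrPPnn
  have hc2 : c ^ 2 ≤ M ^ 2 * t := by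
    calc c ^ 2 ≤ t * q := hCS
      _ ≤ M ^ 2 * t := by rw [mul_comm t q]; exact hqt
  have h2 : γ * (q * t + 2 * c ^ 2) ≤ 3 * |γ| * M ^ 2 * t := by
    have hx : γ * (q * t + 2 * c ^ 2) ≤ |γ| * (q * t + 2 * c ^ 2) :=
      mul_le_mul_of_nonneg_right (le_abs_self γ) (by linarith [sq_nonneg c])
    have hy : |γ| * (q * t + 2 * c ^ 2) ≤ |γ| * (3 * (M ^ 2 * t)) :=
      mul_le_mul_of_nonneg_left (by linarith) (abs_nonneg γ)
    calc γ * (q * t + 2 * c ^ 2) ≤ |γ| * (3 * (M ^ 2 * t)) := le_trans hx hy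
      _ = 3 * |γ| * M ^ 2 * t := by ring
  have h3 : 2 * |β| * M * t + 3 * |γ| * M ^ 2 * t ≤ (κ - α) * t := by
    have := mul_le_mul_of_nonneg_right (show 2 * |β| * M + 3 * |γ| * M ^ 2 ≤ κ - α by linarith) htrPPnn
    linarith [this]
  linarith [h1, h2, h3]
end

section
/- With F̄ and f̄ as in the PDG construction (F̄(U,V) = (α/2)(tr U² + tr V²)/2 − (β/3)tr(UV(U+V)/2) + (γ/4)tr(U²)tr(V²), and f̄(U,V,W) = (α/2)(U+W)/2 − (β/6)[V² + V(U+W)/2 + ((U+W)/2)V − (1/3)tr(V(U+V+W))I] + (γ/2)tr(V²)(U+W)/2), for all symmetric traceless d×d matrix fields U, V, W one has the discrete gradient identity ⟨f̄(U,V,W), W − U⟩ = F̄(V,W) − F̄(U,V), where ⟨A,B⟩ = tr(AᵀB). -/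
open Matrix

/-- The polarized Landau–de Gennes bulk energy density. -/
noncomputable def Fbar {d : ℕ} (α β γ : ℝ) (U V : Matrix (Fin d) (Fin d) ℝ) : ℝ :=
  α / 2 * (((U * U).trace + (V * V).trace) / 2)
    - β / 3 * (U * V * (((1 : ℝ) / 2) • (U + V))).trace
    + γ / 4 * ((U * U).trace * (V * V).trace)

/-- The polarized discrete gradient of the Landau–de Gennes bulk energy. -/
noncomputable def fbar {d : ℕ} (α β γ : ℝ) (U V W : Matrix (Fin d) (Fin d) ℝ) :
    Matrix (Fin d) (Fin d) ℝ :=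
  (α / 2) • (((1 : ℝ) / 2) • (U + W))
    - (β / 6) • (V * V + V * (((1 : ℝ) / 2) • (U + W)) + (((1 : ℝ) / 2) • (U + W)) * V
        - (((1 : ℝ) / 3) * (V * (U + V + W)).trace) • (1 : Matrix (Fin d) (Fin d) ℝ))
    + (γ / 2 * (V * V).trace) • (((1 : ℝ) / 2) • (U + W))

theorem stmt12 {d : ℕ} (α β γ : ℝ) (U V W : Matrix (Fin d) (Fin d) ℝ)
    (hU : U.IsSymm) (hU0 : U.trace = 0)
    (hV : V.IsSymm) (hV0 : V.trace = 0)
    (hW : W.IsSymm) (hW0 : W.trace = 0) :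
    ((fbar α β γ U V W)ᵀ * (W - U)).trace = Fbar α β γ V W - Fbar α β γ U V := by
  have hT : (fbar α β γ U V W)ᵀ = fbar α β γ U V W := by
    simp only [fbar, transpose_add, transpose_sub, transpose_smul, transpose_mul,
      transpose_one, hU.eq, hV.eq, hW.eq]
    noncomm_ring
  have hcyc : ∀ A B C : Matrix (Fin d) (Fin d) ℝ,
      (A * (B * C)).trace = (C * (A * B)).trace := fun A B C => by
    rw [← Matrix.mul_assoc, ← Matrix.mul_assoc, Matrix.trace_mul_cycle]
  have e1 := (hcyc V W V).symm
  have e2 := hcyc V U W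
  have e3 := (hcyc U V W).trans (hcyc W U V)
  have e4 := (hcyc W V W).trans (hcyc W W V)
  have e5 := hcyc V V U
  have e6 := hcyc V U U
  rw [hT]
  simp only [fbar, Fbar, Matrix.sub_mul, Matrix.add_mul, Matrix.mul_add, Matrix.mul_sub,
    smul_mul_assoc, mul_smul_comm, Matrix.one_mul, Matrix.mul_one,
    trace_add, trace_sub, trace_smul, hU0, hV0, hW0, Matrix.mul_assoc,
    smul_eq_mul, trace_one]
  ring_nf
  linear_combination (α/4 + γ*(V*V).trace/4) * (trace_mul_comm U W)
    - β/6*e1 - β/12*e2 - β/12*e3 - β/12*e4 + β/6*e5 + β/12*e6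
end

section
/- Let Fbulk: V → R have L_f-Lipschitz gradient f on a convex set containing Q^{n-1}, Q^n, Q^{n+1}. Then the extrapolated BDF2 pairing satisfies ⟨3Q^{n+1} − 4Q^n + Q^{n-1}, 2f(Q^n) − f(Q^{n-1})⟩ ≥ [3Fbulk(Q^{n+1}) − Fbulk(Q^n)] − [3Fbulk(Q^n) − Fbulk(Q^{n-1})] − 3L_f‖Q^{n+1} − Q^n‖² − 3L_f‖Q^n − Q^{n-1}‖², i.e., d_{2t}Fbulk(Q^{n+1}) ≤ ⟨d_{2t}Q^{n+1}, B₂(f(Q^n))⟩ + 3L_f‖d_tQ^{n+1}‖² + 3L_f‖d_tQ^n‖², with d_{2t}g^{n+1} = 3g^{n+1} − 4g^n + g^{n-1}, d_tg^{n+1} = g^{n+1} − g^n, B₂(g^n) = 2g^n − g^{n-1}, and d_{2t}Fbulk(Q^{n+1}) := 3Fbulk(Q^{n+1}) − 4Fbulk(Q^n) + Fbulk(Q^{n-1}). -/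
/-!
Write `a = ‖Q2 - Q1‖`, `b = ‖Q1 - Q0‖` and `f = ∇Fbulk`. Splitting
`3 Q2 - 4 Q1 + Q0 = 3 (Q2 - Q1) - (Q1 - Q0)` and `2 f(Q1) - f(Q0) = f(Q1) + (f(Q1) - f(Q0))`,
the pairing becomes two first-order Taylor terms at `Q1`, each bounded below by the descent
lemma up to `L/2 a²` resp. `L/2 b²`, plus two cross terms against `f(Q1) - f(Q0)`, bounded by
Cauchy–Schwarz and the Lipschitz bound by `3 L a b` and `L b²`. The estimate
`3 L a b ≤ 3/2 L (a² + b²)` then yields exactly the constants `3 L`.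
-/

open RealInnerProductSpace Set

theorem Set.Subsingleton.of_norm_sub_le_mul_of_neg {E F : Type*} [NormedAddCommGroup E]
    [SeminormedAddCommGroup F] {g : E → F} {s : Set E} {L : ℝ}
    (hL : ∀ x ∈ s, ∀ y ∈ s, ‖g x - g y‖ ≤ L * ‖x - y‖) (hneg : L < 0) : s.Subsingleton := by
  intro x hx y hy
  by_contra hne
  have hpos : 0 < ‖x - y‖ := norm_pos_iff.2 (sub_ne_zero.2 hne)
  nlinarith [hL x hx y hy, norm_nonneg (g x - g y)]

section

variable {V : Type*} [NormedAddCommGroup V] [InnerProductSpace ℝ V]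

theorem inner_bdf2_extrapolation (Q0 Q1 Q2 g0 g1 : V) :
    ⟪3 • Q2 - 4 • Q1 + Q0, 2 • g1 - g0⟫
      = 3 * ⟪g1, Q2 - Q1⟫ + ⟪g1, Q0 - Q1⟫ + 3 * ⟪Q2 - Q1, g1 - g0⟫ - ⟪Q1 - Q0, g1 - g0⟫ := by
  have hQ : 3 • Q2 - 4 • Q1 + Q0 = (3 : ℝ) • (Q2 - Q1) - (Q1 - Q0) := by module
  have hg : 2 • g1 - g0 = g1 + (g1 - g0) := by module
  rw [hQ, hg, real_inner_comm (Q2 - Q1) g1, real_inner_comm (Q0 - Q1) g1]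
  simp only [inner_sub_left, inner_add_right, real_inner_smul_left]
  ring

variable [CompleteSpace V]

theorem Convex.abs_sub_sub_inner_gradient_le {F : V → ℝ} {s : Set V} {L : ℝ} (hs : Convex ℝ s)
    (hF : ∀ z ∈ s, DifferentiableAt ℝ F z)
    (hL : ∀ x ∈ s, ∀ y ∈ s, ‖gradient F x - gradient F y‖ ≤ L * ‖x - y‖)
    {x y : V} (hx : x ∈ s) (hy : y ∈ s) :
    |F y - F x - ⟪gradient F x, y - x⟫| ≤ L / 2 * ‖y - x‖ ^ 2 := by
  set p : ℝ → V := fun t => x + t • (y - x) with hp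
  have hps : ∀ t ∈ Icc (0 : ℝ) 1, p t ∈ s := fun t ht => hs.add_smul_sub_mem hx hy ht
  set φ : ℝ → ℝ := fun t => F (p t) - F x - t * ⟪gradient F x, y - x⟫
  have hφ : ∀ t ∈ Icc (0 : ℝ) 1,
      HasDerivAt φ ⟪gradient F (p t) - gradient F x, y - x⟫ t := by
    intro t ht
    have hp' : HasDerivAt p (y - x) t := by
      have h := ((hasDerivAt_id' t).smul_const (y - x)).const_add x
      rwa [one_smul] at h
    have hFp := (hF _ (hps t ht)).hasGradientAt.hasFDerivAt.comp_hasDerivAt t hp'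
    rw [InnerProductSpace.toDual_apply_apply] at hFp
    have h := (hFp.sub_const (F x)).sub ((hasDerivAt_id' t).mul_const ⟪gradient F x, y - x⟫)
    rwa [one_mul, ← inner_sub_left] at h
  have hbound : ∀ t ∈ Ico (0 : ℝ) 1,
      ‖⟪gradient F (p t) - gradient F x, y - x⟫‖ ≤ L * t * ‖y - x‖ ^ 2 := by
    intro t ht
    have hdist : ‖p t - x‖ = t * ‖y - x‖ := by simp [hp, norm_smul, abs_of_nonneg ht.1]
    calc ‖⟪gradient F (p t) - gradient F x, y - x⟫‖
        ≤ ‖gradient F (p t) - gradient F x‖ * ‖y - x‖ := norm_inner_le_norm _ _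
      _ ≤ L * ‖p t - x‖ * ‖y - x‖ := by
          gcongr
          exact hL _ (hps t (Ico_subset_Icc_self ht)) x hx
      _ = L * t * ‖y - x‖ ^ 2 := by rw [hdist]; ring
  have hB : ∀ t : ℝ, HasDerivAt (fun t => L / 2 * t ^ 2 * ‖y - x‖ ^ 2) (L * t * ‖y - x‖ ^ 2) t := by
    intro t
    refine (((hasDerivAt_pow 2 t).const_mul (L / 2)).mul_const _).congr_deriv ?_
    push_cast
    ring
  have key := image_norm_le_of_norm_deriv_right_le_deriv_boundary
    (fun t ht => (hφ t ht).continuousAt.continuousWithinAt)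
    (fun t ht => (hφ t (Ico_subset_Icc_self ht)).hasDerivWithinAt) (by simp [φ, p]) hB hbound
    (right_mem_Icc.2 zero_le_one)
  simpa [φ, p] using key

end

theorem stmt16 {V : Type*} [NormedAddCommGroup V] [InnerProductSpace ℝ V] [CompleteSpace V]
    (Fbulk : V → ℝ) (hF : ContDiff ℝ 2 Fbulk) (s : Set V) (hs : Convex ℝ s)
    (L : ℝ)
    (hL : ∀ x ∈ s, ∀ y ∈ s, ‖gradient Fbulk x - gradient Fbulk y‖ ≤ L * ‖x - y‖)
    (Q0 Q1 Q2 : V) (h0 : Q0 ∈ s) (h1 : Q1 ∈ s) (h2 : Q2 ∈ s) :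
    ⟪3 • Q2 - 4 • Q1 + Q0, 2 • gradient Fbulk Q1 - gradient Fbulk Q0⟫
      ≥ (3 * Fbulk Q2 - Fbulk Q1) - (3 * Fbulk Q1 - Fbulk Q0)
        - 3 * L * ‖Q2 - Q1‖ ^ 2 - 3 * L * ‖Q1 - Q0‖ ^ 2 := by
  rcases lt_or_ge L 0 with hneg | hL0
  · have hsub := Set.Subsingleton.of_norm_sub_le_mul_of_neg hL hneg
    rw [hsub h1 h0, hsub h2 h0]
    simp [show 3 • Q0 - 4 • Q0 + Q0 = 0 by module]
  have hdiff : ∀ z ∈ s, DifferentiableAt ℝ Fbulk z :=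
    fun z _ => (hF.differentiable (by norm_num)).differentiableAt
  have htaylor₂ := (abs_le.1 (hs.abs_sub_sub_inner_gradient_le hdiff hL h1 h2)).2
  have htaylor₀ := (abs_le.1 (hs.abs_sub_sub_inner_gradient_le hdiff hL h1 h0)).2
  have hcross : ∀ u : V, |⟪u, gradient Fbulk Q1 - gradient Fbulk Q0⟫| ≤ ‖u‖ * (L * ‖Q1 - Q0‖) :=
    fun u => (abs_real_inner_le_norm _ _).trans
      (mul_le_mul_of_nonneg_left (hL Q1 h1 Q0 h0) (norm_nonneg u))
  have hcross₂ := (abs_le.1 (hcross (Q2 - Q1))).1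
  have hcross₀ := (abs_le.1 (hcross (Q1 - Q0))).2
  have hsq := mul_nonneg hL0 (sq_nonneg (‖Q2 - Q1‖ - ‖Q1 - Q0‖))
  rw [norm_sub_rev Q0 Q1] at htaylor₀
  rw [inner_bdf2_extrapolation]
  linarith
end
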